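/- arXiv:1305.2377 — 2 statements merged into one kernel-verified Lean document; each statement's English description precedes it below -/
import Mathlib

section
/- Let (α,ρ) be a lifting pair of a coupling ᾱ: B → Out_D(L), and let λ = d_α ρ ∈ Ω_B³(Z(L)). Then d_{ᾱ} λ = 0; i.e., λ is a 3-cocycle in the complex (Ω_B^•(Z(L)), d_{ᾱ}) of Z(L)-valued B-forms with respect to the induced representation of B on the center Z(L). -/
/-! For any connection `α` and alternating 2-form `ξ`, `d_α² ξ = F_α ∧ ξ`, where `F_α` is the
curvature; the terms without curvature cancel by the Jacobi identity. For a lifting pair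
`F_α = ad ρ`, so `d_α² ρ = ⁅ρ ∧ ρ⁆`, whose six terms cancel in pairs by skew-symmetry of the
bracket. -/

/-- The order-preserving inclusion `Fin (n-1) → Fin n` skipping the index `j`. -/
def skipIdx {n : ℕ} (j : Fin n) (m : Fin (n - 1)) : Fin n :=
  if (m : ℕ) < (j : ℕ) then ⟨m, by have := m.isLt; omega⟩
  else ⟨(m : ℕ) + 1, by have := m.isLt; omega⟩

/-- The Chevalley–Eilenberg/de Rham differential of an `M`-valued `p`-form on a Lie
algebroid `B`, twisted by a connection `α : B → (M → M)`. -/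
def dform {B M : Type*} [LieRing B] [AddCommGroup M]
    (α : B → M → M) (p : ℕ) (ξ : (Fin p → B) → M) :
    (Fin (p + 1) → B) → M :=
  fun s =>
    (∑ i : Fin (p + 1), ((-1 : ℤ) ^ (i : ℕ)) • α (s i) (ξ (s ∘ i.succAbove))) +
      ∑ i : Fin (p + 1), ∑ j : Fin p,
        if (i : ℕ) ≤ (j : ℕ) then
          ((-1 : ℤ) ^ ((i : ℕ) + (j : ℕ) + 1)) •
            ξ (fun m : Fin p =>
              if hm : (m : ℕ) = 0 then ⁅s i, s (i.succAbove j)⁆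
              else s (i.succAbove (skipIdx j ⟨(m : ℕ) - 1, by have := m.isLt; omega⟩)))
        else 0

section ExplicitDifferential

variable {B M : Type*} [LieRing B] [AddCommGroup M] (α : B → M → M)

theorem dform_two_apply (ξ : (Fin 2 → B) → M) (s : Fin 3 → B) :
    dform α 2 ξ s = α (s 0) (ξ ![s 1, s 2]) - α (s 1) (ξ ![s 0, s 2]) + α (s 2) (ξ ![s 0, s 1])
      - ξ ![⁅s 0, s 1⁆, s 2] + ξ ![⁅s 0, s 2⁆, s 1] - ξ ![⁅s 1, s 2⁆, s 0] := by
  obtain ⟨η, rfl⟩ : ∃ η : B → B → M, ξ = fun v => η (v 0) (v 1) :=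
    ⟨fun x y => ξ ![x, y], funext fun v => congrArg ξ (by ext i; fin_cases i <;> rfl)⟩
  simp [dform, Fin.sum_univ_succ, skipIdx, Fin.succAbove, sub_eq_add_neg, add_assoc]

theorem dform_three_apply (ξ : (Fin 3 → B) → M) (s : Fin 4 → B) :
    dform α 3 ξ s =
      α (s 0) (ξ ![s 1, s 2, s 3]) - α (s 1) (ξ ![s 0, s 2, s 3])
      + α (s 2) (ξ ![s 0, s 1, s 3]) - α (s 3) (ξ ![s 0, s 1, s 2])
      - ξ ![⁅s 0, s 1⁆, s 2, s 3] + ξ ![⁅s 0, s 2⁆, s 1, s 3] - ξ ![⁅s 0, s 3⁆, s 1, s 2]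
      - ξ ![⁅s 1, s 2⁆, s 0, s 3] + ξ ![⁅s 1, s 3⁆, s 0, s 2] - ξ ![⁅s 2, s 3⁆, s 0, s 1] := by
  obtain ⟨η, rfl⟩ : ∃ η : B → B → B → M, ξ = fun v => η (v 0) (v 1) (v 2) :=
    ⟨fun x y z => ξ ![x, y, z], funext fun v => congrArg ξ (by ext i; fin_cases i <;> rfl)⟩
  simp [dform, Fin.sum_univ_succ, skipIdx, Fin.succAbove, sub_eq_add_neg, add_assoc]

def curvature (b₁ b₂ : B) (m : M) : M :=
  α b₁ (α b₂ m) - α b₂ (α b₁ m) - α ⁅b₁, b₂⁆ m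

end ExplicitDifferential

theorem lie_lie_left {B : Type*} [LieRing B] (a b c : B) :
    ⁅⁅a, b⁆, c⁆ = ⁅⁅a, c⁆, b⁆ - ⁅⁅b, c⁆, a⁆ := by
  rw [lie_lie, ← lie_skew ⁅b, c⁆ a, ← lie_skew ⁅a, c⁆ b]
  abel

namespace AlternatingMap

variable {R B M : Type*} [Ring R] [AddCommGroup B] [Module R B] [AddCommGroup M] [Module R M]

theorem map_vecCons_sub {n : ℕ} (f : B [⋀^Fin n.succ]→ₗ[R] M) (v : Fin n → B) (x y : B) :
    f (Matrix.vecCons (x - y) v) = f (Matrix.vecCons x v) - f (Matrix.vecCons y v) :=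
  eq_sub_of_add_eq (by rw [← map_vecCons_add, sub_add_cancel])

theorem map_fin_two_swap (f : B [⋀^Fin 2]→ₗ[R] M) (x y : B) : f ![x, y] = -f ![y, x] := by
  have e : ![y, x] ∘ Equiv.swap (0 : Fin 2) 1 = ![x, y] := by
    ext i; fin_cases i <;> rfl
  rw [← e, f.map_swap _ (by decide)]

end AlternatingMap

theorem dform_dform_two_eq_curvature {R B M : Type*} [Ring R] [LieRing B] [Module R B]
    [AddCommGroup M] [Module R M] (ξ : B [⋀^Fin 2]→ₗ[R] M) (α : B → M →+ M) (s : Fin 4 → B) :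
    dform (fun b x => α b x) 3 (dform (fun b x => α b x) 2 ξ) s =
      curvature (fun b x => α b x) (s 0) (s 1) (ξ ![s 2, s 3])
      - curvature (fun b x => α b x) (s 0) (s 2) (ξ ![s 1, s 3])
      + curvature (fun b x => α b x) (s 0) (s 3) (ξ ![s 1, s 2])
      + curvature (fun b x => α b x) (s 1) (s 2) (ξ ![s 0, s 3])
      - curvature (fun b x => α b x) (s 1) (s 3) (ξ ![s 0, s 2])
      + curvature (fun b x => α b x) (s 2) (s 3) (ξ ![s 0, s 1]) := by
  rw [dform_three_apply]
  simp only [dform_two_apply, curvature, Matrix.cons_val_zero, Matrix.cons_val_one,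
    Matrix.cons_val_two, Matrix.head_cons, Matrix.tail_cons, map_add, map_sub]
  rw [ξ.map_fin_two_swap ⁅s 2, s 3⁆ ⁅s 0, s 1⁆, ξ.map_fin_two_swap ⁅s 1, s 3⁆ ⁅s 0, s 2⁆,
    ξ.map_fin_two_swap ⁅s 1, s 2⁆ ⁅s 0, s 3⁆]
  rw [lie_lie_left (s 0) (s 1) (s 2), lie_lie_left (s 0) (s 1) (s 3),
    lie_lie_left (s 0) (s 2) (s 3), lie_lie_left (s 1) (s 2) (s 3)]
  simp only [ξ.map_vecCons_sub]
  abel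

theorem lifting_pair_dρ_is_cocycle_general
    {k : Type*} [Field k] {R : Type*} [CommRing R]
    {B : Type*} [LieRing B] [Module R B]
    {L : Type*} [LieRing L] [LieAlgebra k L] [LieAlgebra R L]
    (α : B → L →ₗ[k] L)
    (ρ : B [⋀^Fin 2]→ₗ[R] L)
    (hF : ∀ (b₁ b₂ : B) (l : L),
      α b₁ (α b₂ l) - α b₂ (α b₁ l) - α ⁅b₁, b₂⁆ l = ⁅ρ ![b₁, b₂], l⁆) :
    ∀ s : Fin 4 → B,
      dform (fun b x => α b x) 3 (dform (fun b x => α b x) 2 ⇑ρ) s = 0 := by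
  intro s
  refine (dform_dform_two_eq_curvature ρ (fun b => (α b).toAddMonoidHom) s).trans ?_
  simp only [curvature, LinearMap.toAddMonoidHom_coe, hF]
  rw [← lie_skew (ρ ![s 0, s 1]), ← lie_skew (ρ ![s 0, s 2]), ← lie_skew (ρ ![s 0, s 3])]
  abel

/-- Let `(α, ρ)` be a lifting pair of a coupling `ᾱ : B → Out_D(L)`
and `λ = d_α ρ ∈ Ω_B³(Z(L))`.  Then `d_ᾱ λ = 0`: since `λ` is central-valued, the
differential of the induced representation of `B` on `Z(L)` is computed by any lift
`α` of `ᾱ`, so `λ` is a 3-cocycle of the complex `(Ω_B^•(Z(L)), d_ᾱ)`. -/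
theorem lifting_pair_dρ_is_cocycle
    {k : Type*} [Field k] {R : Type*} [CommRing R] [Algebra k R]
    {B : Type*} [LieRing B] [LieAlgebra k B] [Module R B] [IsScalarTower k R B]
    {L : Type*} [LieRing L] [LieAlgebra k L] [LieAlgebra R L] [IsScalarTower k R L]
    (a : B →ₗ[R] Derivation k R R)
    (hLeibB : ∀ (s t : B) (f : R), ⁅s, f • t⁆ = f • ⁅s, t⁆ + a s f • t)
    (α : B → L →ₗ[k] L)
    (hadd : ∀ b b' : B, α (b + b') = α b + α b')
    (hsmul : ∀ (f : R) (b : B) (l : L), α (f • b) l = f • α b l)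
    (hD : ∀ (b : B) (l l' : L), α b ⁅l, l'⁆ = ⁅α b l, l'⁆ + ⁅l, α b l'⁆)
    (hLeibα : ∀ (b : B) (f : R) (l : L), α b (f • l) = f • α b l + a b f • l)
    (ρ : B [⋀^Fin 2]→ₗ[R] L)
    (hF : ∀ (b₁ b₂ : B) (l : L),
      α b₁ (α b₂ l) - α b₂ (α b₁ l) - α ⁅b₁, b₂⁆ l = ⁅ρ ![b₁, b₂], l⁆) :
    ∀ s : Fin 4 → B,
      dform (fun b x => α b x) 3 (dform (fun b x => α b x) 2 ⇑ρ) s = 0 :=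
  lifting_pair_dρ_is_cocycle_general α ρ hF
end

section
/- Given a lifting pair (α,ρ) of a coupling ᾱ: B → Out_D(L), define on B ⊕ L the bracket [(b,l),(b',l')]_{α,ρ} = ([b,b'], [l,l'] + α(b)(l') − α(b')(l) + ρ(b,b')). This bracket is skew-symmetric, restricts to the given brackets on L and projects to the bracket on B, and it satisfies the Jacobi identity if and only if d_α ρ = 0. When d_α ρ = 0, (B ⊕ L, [·,·]_{α,ρ}) with anchor (b,l) ↦ a_B(b) is a Lie-Rinehart algebra extension of B by L inducing the coupling ᾱ. -/
/-!
The bracket is the semidirect-product bracket of `B` acting on `L` through `α`, twisted by `ρ`.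
Its Jacobiator has no `B`-component, and in the `L`-component everything cancels except
`-(d_α ρ)` evaluated on the `B`-components: the terms quadratic in `α` against `α ⁅b, b'⁆` and
`⁅ρ(b, b'), ·⁆` by the curvature identity `F_α = ad_ρ`, and the terms mixing `α` with the bracket
of `L` because every `α b` is a derivation.
-/

theorem lie_lie_add_lie_lie_add_lie_lie {L : Type*} [LieRing L] (x y z : L) :
    ⁅⁅x, y⁆, z⁆ + ⁅⁅y, z⁆, x⁆ + ⁅⁅z, x⁆, y⁆ = 0 := by
  rw [← lie_skew ⁅x, y⁆, ← lie_skew ⁅y, z⁆, ← lie_skew ⁅z, x⁆, ← neg_add, ← neg_add,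
    add_comm, ← add_assoc, lie_jacobi, neg_zero]

theorem dform_two {B M : Type*} [LieRing B] [AddCommGroup M]
    (α : B → M → M) (ξ : (Fin 2 → B) → M) (s : Fin 3 → B) :
    dform α 2 ξ s =
      α (s 0) (ξ ![s 1, s 2]) - α (s 1) (ξ ![s 0, s 2]) + α (s 2) (ξ ![s 0, s 1])
        - ξ ![⁅s 0, s 1⁆, s 2] + ξ ![⁅s 0, s 2⁆, s 1] - ξ ![⁅s 1, s 2⁆, s 0] := by
  -- with `ξ` read as a function of the two entries, `simp` can evaluate the reindexed tuples
  obtain ⟨η, hη⟩ : ∃ η : B → B → M, ∀ f, ξ f = η (f 0) (f 1) :=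
    ⟨fun a b => ξ ![a, b], fun f => congrArg ξ (by ext i; fin_cases i <;> rfl)⟩
  simp [dform, Fin.sum_univ_succ, hη, skipIdx, Fin.succAbove, sub_eq_add_neg, add_assoc]

namespace AlternatingMap
variable {R M N : Type*} [Ring R] [AddCommGroup M] [Module R M] [AddCommGroup N] [Module R N]
  (f : M [⋀^Fin 2]→ₗ[R] N)

theorem map_pair_swap (a b : M) : f ![a, b] = -f ![b, a] := by
  rw [← f.map_swap ![b, a] (i := 0) (j := 1) (by decide)]
  congr 1
  ext i; fin_cases i <;> rfl

theorem map_pair_neg_left (a b : M) : f ![-a, b] = -f ![a, b] := by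
  simpa using f.map_vecCons_smul ![b] (-1) a

theorem map_pair_smul_right (c : R) (a b : M) : f ![a, c • b] = c • f ![a, b] := by
  rw [map_pair_swap, f.map_vecCons_smul, map_pair_swap f b, smul_neg, neg_neg]

end AlternatingMap

section SumBracket

variable {R B L : Type*} [LieRing B] [LieRing L]

section
variable [Ring R] [Module R B] [Module R L] (α : B → L →+ L) (ρ : B [⋀^Fin 2]→ₗ[R] L)

def sumBracket (x y : B × L) : B × L :=
  (⁅x.1, y.1⁆, ⁅x.2, y.2⁆ + α x.1 y.2 - α y.1 x.2 + ρ ![x.1, y.1])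

theorem sumBracket_swap (x y : B × L) : sumBracket α ρ x y = -sumBracket α ρ y x := by
  ext
  · exact (lie_skew _ _).symm
  · simp only [sumBracket, Prod.snd_neg, ← lie_skew x.2, ρ.map_pair_swap x.1]
    abel

theorem sumBracket_jacobi (hD : ∀ b l l', α b ⁅l, l'⁆ = ⁅α b l, l'⁆ + ⁅l, α b l'⁆)
    (hF : ∀ b₁ b₂ l, α b₁ (α b₂ l) - α b₂ (α b₁ l) - α ⁅b₁, b₂⁆ l = ⁅ρ ![b₁, b₂], l⁆)
    (x y z : B × L) :
    sumBracket α ρ (sumBracket α ρ x y) z + sumBracket α ρ (sumBracket α ρ y z) x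
      + sumBracket α ρ (sumBracket α ρ z x) y =
      (0, -dform (fun b l => α b l) 2 ρ ![x.1, y.1, z.1]) := by
  ext
  · exact lie_lie_add_lie_lie_add_lie_lie x.1 y.1 z.1
  · have hρ₁ : α y.1 (ρ ![z.1, x.1]) = -α y.1 (ρ ![x.1, z.1]) := by
      rw [ρ.map_pair_swap, map_neg]
    have hρ₂ : ρ ![⁅z.1, x.1⁆, y.1] = -ρ ![⁅x.1, z.1⁆, y.1] := by
      rw [← lie_skew, ρ.map_pair_neg_left]
    simp only [sumBracket, Prod.snd_add, dform_two, add_lie, sub_lie, map_add, map_sub,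
      Matrix.cons_val_zero, Matrix.cons_val_one, Matrix.cons_val_two, Matrix.head_cons,
      Matrix.tail_cons]
    linear_combination (norm := abel) lie_lie_add_lie_lie_add_lie_lie x.2 y.2 z.2
      - hD z.1 x.2 y.2 - hD x.1 y.2 z.2 - hD y.1 z.2 x.2
      + lie_skew (α z.1 y.2) x.2 + lie_skew (α x.1 z.2) y.2 + lie_skew (α y.1 x.2) z.2
      - hF x.1 y.1 z.2 - hF y.1 z.1 x.2 - hF z.1 x.1 y.2 - hρ₁ + hρ₂

theorem sumBracket_jacobi_iff (hD : ∀ b l l', α b ⁅l, l'⁆ = ⁅α b l, l'⁆ + ⁅l, α b l'⁆)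
    (hF : ∀ b₁ b₂ l, α b₁ (α b₂ l) - α b₂ (α b₁ l) - α ⁅b₁, b₂⁆ l = ⁅ρ ![b₁, b₂], l⁆) :
    (∀ x y z : B × L, sumBracket α ρ (sumBracket α ρ x y) z
      + sumBracket α ρ (sumBracket α ρ y z) x + sumBracket α ρ (sumBracket α ρ z x) y = 0) ↔
      ∀ s : Fin 3 → B, dform (fun b l => α b l) 2 ρ s = 0 := by
  simp only [sumBracket_jacobi α ρ hD hF, Prod.mk_eq_zero, neg_eq_zero, true_and]
  refine ⟨fun h s => ?_, fun h x y z => h _⟩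
  have hs : ![s 0, s 1, s 2] = s := by ext i; fin_cases i <;> rfl
  simpa only [hs] using h (s 0, 0) (s 1, 0) (s 2, 0)

theorem sumBracket_zero_mk_zero_mk (hα : α 0 = 0) (l l' : L) :
    sumBracket α ρ (0, l) (0, l') = (0, ⁅l, l'⁆) := by
  simp [sumBracket, hα, ρ.map_coord_zero (m := ![0, 0]) 0 rfl]

theorem sumBracket_mk_zero_zero_mk (b : B) (l : L) :
    sumBracket α ρ (b, 0) (0, l) = (0, α b l) := by
  simp [sumBracket, ρ.map_coord_zero (m := ![b, 0]) 1 rfl]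

end

section
variable [CommRing R] [Module R B] [LieAlgebra R L] (α : B → L →+ L) (ρ : B [⋀^Fin 2]→ₗ[R] L)

theorem sumBracket_smul_right (a : B → R → R)
    (hLeibB : ∀ (s t : B) (f : R), ⁅s, f • t⁆ = f • ⁅s, t⁆ + a s f • t)
    (hsmul : ∀ (f : R) (b : B) (l : L), α (f • b) l = f • α b l)
    (hLeibα : ∀ (b : B) (f : R) (l : L), α b (f • l) = f • α b l + a b f • l)
    (x y : B × L) (f : R) :
    sumBracket α ρ x (f • y) = f • sumBracket α ρ x y + a x.1 f • y := by
  ext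
  · exact hLeibB x.1 y.1 f
  · simp only [sumBracket, Prod.smul_fst, Prod.smul_snd, Prod.snd_add, lie_smul, hLeibα, hsmul,
      ρ.map_pair_smul_right, smul_add, smul_sub]
    abel

end

end SumBracket

theorem bracket_on_sum_extension_general
    {k : Type*} [Field k] {R : Type*} [CommRing R] [Algebra k R]
    {B : Type*} [LieRing B] [Module R B]
    {L : Type*} [LieRing L] [LieAlgebra k L] [LieAlgebra R L]
    (a : B →ₗ[R] Derivation k R R)
    (hLeibB : ∀ (s t : B) (f : R), ⁅s, f • t⁆ = f • ⁅s, t⁆ + a s f • t)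
    (α : B → L →ₗ[k] L)
    (hsmul : ∀ (f : R) (b : B) (l : L), α (f • b) l = f • α b l)
    (hD : ∀ (b : B) (l l' : L), α b ⁅l, l'⁆ = ⁅α b l, l'⁆ + ⁅l, α b l'⁆)
    (hLeibα : ∀ (b : B) (f : R) (l : L), α b (f • l) = f • α b l + a b f • l)
    (ρ : B [⋀^Fin 2]→ₗ[R] L)
    (hF : ∀ (b₁ b₂ : B) (l : L),
      α b₁ (α b₂ l) - α b₂ (α b₁ l) - α ⁅b₁, b₂⁆ l = ⁅ρ ![b₁, b₂], l⁆) :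
    ∀ br : B × L → B × L → B × L,
      br = (fun x y =>
        (⁅x.1, y.1⁆, ⁅x.2, y.2⁆ + α x.1 y.2 - α y.1 x.2 + ρ ![x.1, y.1])) →
      -- skew-symmetry
      (∀ x y : B × L, br x y = - br y x) ∧
      -- restricts to the bracket of `L`
      (∀ l l' : L, br (0, l) (0, l') = (0, ⁅l, l'⁆)) ∧
      -- projects to the bracket of `B`
      (∀ x y : B × L, (br x y).1 = ⁅x.1, y.1⁆) ∧
      -- acts on `L` through `α` (inducing the coupling `ᾱ`)
      (∀ (b : B) (l : L), br (b, 0) (0, l) = (0, α b l)) ∧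
      -- Jacobi identity  ↔  `d_α ρ = 0`
      ((∀ x y z : B × L, br (br x y) z + br (br y z) x + br (br z x) y = 0) ↔
        (∀ s : Fin 3 → B, dform (fun b x => α b x) 2 ⇑ρ s = 0)) ∧
      -- when `d_α ρ = 0`, the Leibniz rule holds w.r.t. the anchor `(b,l) ↦ a b`,
      -- so `(B ⊕ L, br)` is a Lie–Rinehart extension of `B` by `L`
      ((∀ s : Fin 3 → B, dform (fun b x => α b x) 2 ⇑ρ s = 0) →
        ∀ (x y : B × L) (f : R), br x (f • y) = f • br x y + a x.1 f • y) := by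
  intro br hbr
  obtain rfl : br = sumBracket (fun b => (α b : L →+ L)) ρ := hbr
  have hα₀ : (α 0 : L →+ L) = 0 := by
    ext l
    simpa using hsmul 0 0 l
  exact ⟨sumBracket_swap _ ρ, sumBracket_zero_mk_zero_mk _ ρ hα₀, fun _ _ => rfl,
    sumBracket_mk_zero_zero_mk _ ρ, sumBracket_jacobi_iff _ ρ hD hF,
    fun _ => sumBracket_smul_right _ ρ (fun b => a b) hLeibB hsmul hLeibα⟩

/-- Given a lifting pair `(α, ρ)` of a coupling `ᾱ : B → Out_D(L)`,
the bracket `[(b,l),(b',l')] = (⁅b,b'⁆, ⁅l,l'⁆ + α b l' − α b' l + ρ(b,b'))` on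
`B ⊕ L` is skew-symmetric, restricts to the bracket of `L`, projects to the bracket
of `B`, and satisfies the Jacobi identity iff `d_α ρ = 0`.  When `d_α ρ = 0`, the
bracket makes `B ⊕ L` (with anchor `(b,l) ↦ a b`) a Lie–Rinehart algebra extension of
`B` by `L` inducing the coupling `ᾱ` (i.e. satisfying the Leibniz rule, and acting on
`L` through `α`). -/
theorem bracket_on_sum_extension
    {k : Type*} [Field k] {R : Type*} [CommRing R] [Algebra k R]
    {B : Type*} [LieRing B] [LieAlgebra k B] [Module R B] [IsScalarTower k R B]
    {L : Type*} [LieRing L] [LieAlgebra k L] [LieAlgebra R L] [IsScalarTower k R L]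
    (a : B →ₗ[R] Derivation k R R)
    (hLeibB : ∀ (s t : B) (f : R), ⁅s, f • t⁆ = f • ⁅s, t⁆ + a s f • t)
    (α : B → L →ₗ[k] L)
    (hadd : ∀ b b' : B, α (b + b') = α b + α b')
    (hsmul : ∀ (f : R) (b : B) (l : L), α (f • b) l = f • α b l)
    (hD : ∀ (b : B) (l l' : L), α b ⁅l, l'⁆ = ⁅α b l, l'⁆ + ⁅l, α b l'⁆)
    (hLeibα : ∀ (b : B) (f : R) (l : L), α b (f • l) = f • α b l + a b f • l)
    (ρ : B [⋀^Fin 2]→ₗ[R] L)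
    (hF : ∀ (b₁ b₂ : B) (l : L),
      α b₁ (α b₂ l) - α b₂ (α b₁ l) - α ⁅b₁, b₂⁆ l = ⁅ρ ![b₁, b₂], l⁆) :
    ∀ br : B × L → B × L → B × L,
      br = (fun x y =>
        (⁅x.1, y.1⁆, ⁅x.2, y.2⁆ + α x.1 y.2 - α y.1 x.2 + ρ ![x.1, y.1])) →
      -- skew-symmetry
      (∀ x y : B × L, br x y = - br y x) ∧
      -- restricts to the bracket of `L`
      (∀ l l' : L, br (0, l) (0, l') = (0, ⁅l, l'⁆)) ∧
      -- projects to the bracket of `B`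
      (∀ x y : B × L, (br x y).1 = ⁅x.1, y.1⁆) ∧
      -- acts on `L` through `α` (inducing the coupling `ᾱ`)
      (∀ (b : B) (l : L), br (b, 0) (0, l) = (0, α b l)) ∧
      -- Jacobi identity  ↔  `d_α ρ = 0`
      ((∀ x y z : B × L, br (br x y) z + br (br y z) x + br (br z x) y = 0) ↔
        (∀ s : Fin 3 → B, dform (fun b x => α b x) 2 ⇑ρ s = 0)) ∧
      -- when `d_α ρ = 0`, the Leibniz rule holds w.r.t. the anchor `(b,l) ↦ a b`,
      -- so `(B ⊕ L, br)` is a Lie–Rinehart extension of `B` by `L`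
      ((∀ s : Fin 3 → B, dform (fun b x => α b x) 2 ⇑ρ s = 0) →
        ∀ (x y : B × L) (f : R), br x (f • y) = f • br x y + a x.1 f • y) :=
  bracket_on_sum_extension_general a hLeibB α hsmul hD hLeibα ρ hF
end
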